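/- The graph U_Par is monotone: if u, u', v, v' are vertices of U_Par with v ≥ u, u' ≥ v' (in the lexicographic order on tuples), and there is an edge with priority x from u to u', then there is an edge with priority x from v to v'. -/

import Mathlib

/-- Strict lexicographic comparison of the first `t` entries: `v <lex v'`. -/
def lexLtBelow (t : ℕ) (v v' : ℕ → Ordinal) : Prop :=
  ∃ j < t, (∀ i < j, v i = v' i) ∧ v j < v' j

/-- Non-strict lexicographic comparison of the first `t` entries: `v ≤lex v'`. -/
def lexLeBelow (t : ℕ) (v v' : ℕ → Ordinal) : Prop :=
  lexLtBelow t v v' ∨ ∀ i < t, v i = v' i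

/-- Edge of priority `x` in the universal graph for parity (vertices are tuples of
ordinals indexed by the odd numbers in `[0,d]`; entry `i` stands for index `2i+1`). -/
def UParEdge (x : ℕ) (v v' : ℕ → Ordinal) : Prop :=
  if Even x then lexLeBelow (x / 2) v' v else lexLtBelow (x / 2 + 1) v' v

/-! An edge of priority `x` only compares prefixes of length `x / 2` or `x / 2 + 1`, which
is at most `d / 2`. Truncating the comparisons `u ≤ v` and `v' ≤ u'` to that prefix, the
claim becomes transitivity of the lexicographic order on `Fin t → Ordinal`. -/

section Lex

variable {s t : ℕ} {v w : ℕ → Ordinal}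

theorem lexLtBelow_iff_toLex_lt :
    lexLtBelow t v w ↔ toLex (fun i : Fin t => v i) < toLex (fun i : Fin t => w i) := by
  constructor
  · rintro ⟨j, hj, heq, hlt⟩
    exact ⟨⟨j, hj⟩, fun i hi => heq i hi, hlt⟩
  · rintro ⟨⟨j, hj⟩, heq, hlt⟩
    exact ⟨j, hj, fun i hi => heq ⟨i, hi.trans hj⟩ hi, hlt⟩

theorem lexLeBelow_iff_toLex_le :
    lexLeBelow t v w ↔ toLex (fun i : Fin t => v i) ≤ toLex (fun i : Fin t => w i) := by
  rw [le_iff_lt_or_eq, lexLeBelow, lexLtBelow_iff_toLex_lt, toLex_inj, funext_iff,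
    Fin.forall_iff]
  rfl

theorem lexLeBelow.of_le (hst : s ≤ t) (h : lexLeBelow t v w) : lexLeBelow s v w := by
  rcases h with ⟨j, hj, heq, hlt⟩ | heq
  · by_cases hjs : j < s
    · exact Or.inl ⟨j, hjs, heq, hlt⟩
    · exact Or.inr fun i hi => heq i (hi.trans_le (not_lt.1 hjs))
  · exact Or.inr fun i hi => heq i (hi.trans_le hst)

end Lex

theorem uPar_monotone (d : ℕ) (hd : Even d) (x : ℕ) (hx : x ≤ d)
    (u u' v v' : ℕ → Ordinal)
    (huv : lexLeBelow (d / 2) u v) (hv'u' : lexLeBelow (d / 2) v' u')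
    (he : UParEdge x u u') :
    UParEdge x v v' := by
  unfold UParEdge at he ⊢
  split_ifs at he ⊢ with hev
  · have ht : x / 2 ≤ d / 2 := Nat.div_le_div_right hx
    rw [lexLeBelow_iff_toLex_le] at he ⊢
    exact (lexLeBelow_iff_toLex_le.1 (hv'u'.of_le ht)).trans
      (he.trans (lexLeBelow_iff_toLex_le.1 (huv.of_le ht)))
  · -- an odd `x` lies strictly below the even `d`
    have ht : x / 2 + 1 ≤ d / 2 := by
      obtain ⟨k, rfl⟩ := Nat.not_even_iff_odd.mp hev
      obtain ⟨m, rfl⟩ := hd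
      omega
    rw [lexLtBelow_iff_toLex_lt] at he ⊢
    exact (lexLeBelow_iff_toLex_le.1 (hv'u'.of_le ht)).trans_lt
      (he.trans_le (lexLeBelow_iff_toLex_le.1 (huv.of_le ht)))
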